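/- arXiv:0801.0710 — 2 statements merged into one kernel-verified Lean document; each statement's English description precedes it below -/
import Mathlib

section
/- Let $N \ge 1$ and $\ell \ge 0$ be integers and let $\alpha:\mathbb{R}^N\times\mathbb{R}^N\to\mathbb{C}$ be a smooth function such that for every compact set $K\subset\mathbb{R}^N\times\mathbb{R}^N$ there is a constant $C$ with $|\alpha(x,y)| \le C|x-y|^{\ell}$ on $K$. Then for each $j\in\{1,\dots,N\}$ the function $L_j\alpha := \partial\alpha/\partial x_j + \partial\alpha/\partial y_j$ is smooth and satisfies the same type of estimate: for every compact set $K\subset\mathbb{R}^N\times\mathbb{R}^N$ there is a constant $C'$ with $|L_j\alpha(x,y)| \le C'|x-y|^{\ell}$ on $K$. -/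
open Set
variable {X : Type*} [NormedAddCommGroup X] [NormedSpace ℝ X]

/-- directional derivative -/
noncomputable def Dd (f : X → ℂ) (w : X) : X → ℂ := fun q => fderiv ℝ f q w

lemma Dd_eq_comp (f : X → ℂ) (w : X) :
    Dd f w = (ContinuousLinearMap.apply ℝ ℂ w) ∘ (fderiv ℝ f) := rfl

lemma contDiff_Dd {f : X → ℂ} (hf : ContDiff ℝ (⊤:ℕ∞) f) (w : X) :
    ContDiff ℝ (⊤:ℕ∞) (Dd f w) := by
  rw [Dd_eq_comp]
  exact (ContinuousLinearMap.apply ℝ ℂ w).contDiff.comp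
    (hf.fderiv_right (by simp))

lemma peel {g : X → ℂ} (hg : ContDiff ℝ (⊤:ℕ∞) g) (w : X) (k : ℕ) (x : X) :
    iteratedFDeriv ℝ (k+1) g x (fun _ => w) = iteratedFDeriv ℝ k (Dd g w) x (fun _ => w) := by
  rw [iteratedFDeriv_succ_apply_right, Dd_eq_comp,
    ContinuousLinearMap.iteratedFDeriv_comp_left _ (hg.fderiv_right (m := (⊤:ℕ∞)) (by simp)).contDiffAt (x := x) (by norm_cast; exact le_top)]
  rfl

lemma Dd_comm {f : X → ℂ} (hf : ContDiff ℝ (⊤:ℕ∞) f) (v w : X) :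
    Dd (Dd f v) w = Dd (Dd f w) v := by
  funext q
  have hd1 : ∀ (u : X) (q : X), fderiv ℝ (Dd f u) q = (ContinuousLinearMap.apply ℝ ℂ u).comp
      (fderiv ℝ (fderiv ℝ f) q) := by
    intro u q
    rw [Dd_eq_comp]
    exact ((ContinuousLinearMap.apply ℝ ℂ u).hasFDerivAt.comp q
      (((hf.fderiv_right (m := (⊤:ℕ∞)) (by simp)).differentiable (by norm_cast)) q).hasFDerivAt).fderiv
  have hsym := (hf.contDiffAt (x := q)).isSymmSndFDerivAt (by rw [minSmoothness_of_isRCLikeNormedField]; exact WithTop.coe_le_coe.2 (le_top : (2:ℕ∞) ≤ ⊤))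
  show fderiv ℝ (Dd f v) q w = fderiv ℝ (Dd f w) q v
  rw [hd1, hd1]
  exact hsym.eq w v

lemma hasDerivAt_line (f : X → ℂ) (hf : ContDiff ℝ (⊤:ℕ∞) f) (a w : X) (t : ℝ) :
    HasDerivAt (fun s : ℝ => f (a + s • w)) (Dd f w (a + t • w)) t := by
  have hline : HasDerivAt (fun s : ℝ => a + s • w) w t := by
    simpa using ((hasDerivAt_id t).smul_const w).const_add a
  have hfd : HasFDerivAt f (fderiv ℝ f (a + t • w)) (a + t • w) :=
    ((hf.differentiable (by norm_cast)) _).hasFDerivAt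
  exact hfd.comp_hasDerivAt t hline

lemma deriv_line (f : X → ℂ) (hf : ContDiff ℝ (⊤:ℕ∞) f) (a w : X) :
    deriv (fun s : ℝ => f (a + s • w)) = fun s => Dd f w (a + s • w) :=
  funext fun t => (hasDerivAt_line f hf a w t).deriv

lemma iteratedDeriv_line (f : X → ℂ) (hf : ContDiff ℝ (⊤:ℕ∞) f) (a w : X) (k : ℕ) (t : ℝ) :
    iteratedDeriv k (fun s : ℝ => f (a + s • w)) t
      = iteratedFDeriv ℝ k f (a + t • w) (fun _ => w) := by
  induction k generalizing f with
  | zero => simp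
  | succ k ih =>
    rw [iteratedDeriv_succ', deriv_line f hf a w, ih (Dd f w) (contDiff_Dd hf w),
      ← peel hf w k]

open Set in
lemma iterDerivWithin_eq (g : ℝ → ℂ) (hg : ContDiff ℝ (⊤:ℕ∞) g) {s : Set ℝ}
    (hs : UniqueDiffOn ℝ s) {x : ℝ} (hx : x ∈ s) (n : ℕ) :
    iteratedDerivWithin n g s x = iteratedDeriv n g x := by
  have H : HasFTaylorSeriesUpToOn ((⊤:ℕ∞) : WithTop ℕ∞) g (ftaylorSeries ℝ g) univ := by
    rw [← ftaylorSeriesWithin_univ]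
    exact (hg.contDiffOn).ftaylorSeriesWithin uniqueDiffOn_univ
  have h2 := (H.mono (subset_univ s)).eq_iteratedFDerivWithin_of_uniqueDiffOn
    (m := n) (by norm_cast; exact le_top) hs hx
  rw [iteratedDerivWithin_eq_iteratedFDerivWithin, iteratedDeriv_eq_iteratedFDeriv, ← h2]
  rfl

open Set in
lemma oneD_vanish {g : ℝ → ℂ} (hg : ContDiff ℝ (⊤:ℕ∞) g) {A : ℝ} {l : ℕ}
    (hA : ∀ t ∈ Icc (0:ℝ) 1, ‖g t‖ ≤ A * t ^ l) :
    ∀ k, k < l → iteratedDeriv k g 0 = 0 := by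
  intro k
  induction k using Nat.strong_induction_on with
  | _ k ih =>
    intro hk
    -- bound the (k+1)-st derivative on [0,1]
    obtain ⟨M0, hM0⟩ := (isCompact_Icc (a := (0:ℝ)) (b := 1)).exists_bound_of_continuousOn
      (hg.continuous_iteratedFDeriv (m := k+1) (by norm_cast; exact le_top)).continuousOn
    set M : ℝ := max M0 0 with hM
    have hMnn : 0 ≤ M := le_max_right _ _
    have hM' : ∀ y ∈ Icc (0:ℝ) 1, ‖iteratedDeriv (k+1) g y‖ ≤ M := by
      intro y hy
      rw [iteratedDeriv_eq_iteratedFDeriv]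
      calc ‖iteratedFDeriv ℝ (k+1) g y (fun _ => (1:ℝ))‖
          ≤ ‖iteratedFDeriv ℝ (k+1) g y‖ * ∏ _i : Fin (k+1), ‖(1:ℝ)‖ :=
            ContinuousMultilinearMap.le_opNorm _ _
        _ ≤ M := by simp; exact (hM0 y hy).trans (le_max_left _ _)
    set c : ℂ := iteratedDeriv k g 0 with hc
    set D : ℝ := (k.factorial : ℝ) * (|A| + M) with hD
    have hDnn : 0 ≤ D := by positivity
    have key : ∀ t : ℝ, t ∈ Ioc (0:ℝ) 1 → ‖c‖ ≤ D * t := by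
      intro t ht
      have ht0 : 0 < t := ht.1
      have ht1 : t ≤ 1 := ht.2
      have hsub : Icc (0:ℝ) t ⊆ Icc 0 1 := Icc_subset_Icc le_rfl ht1
      have hud : UniqueDiffOn ℝ (Icc (0:ℝ) t) := uniqueDiffOn_Icc ht0
      have htay := taylor_mean_remainder_bound (f := g) (a := 0) (b := t) (x := t)
        (n := k) (C := M) ht0.le ((hg.of_le (by norm_cast; exact le_top)).contDiffOn) (right_mem_Icc.2 ht0.le)
        (fun y hy => by
          rw [iterDerivWithin_eq g hg hud hy]
          exact hM' y (hsub hy))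
      -- compute the Taylor polynomial
      have hpoly : taylorWithinEval g k (Icc 0 t) 0 t
          = ((k.factorial : ℝ)⁻¹ * t ^ k) • c := by
        rw [taylor_within_apply]
        rw [Finset.sum_eq_single k]
        · rw [iterDerivWithin_eq g hg hud (left_mem_Icc.2 ht0.le)]
          simp [hc]
        · intro i hi hik
          have hik' : i < k := by
            rcases Finset.mem_range.1 hi with h
            omega
          rw [iterDerivWithin_eq g hg hud (left_mem_Icc.2 ht0.le), ih i hik' (hik'.trans hk)]
          simp
        · intro h; exact absurd (Finset.self_mem_range_succ k) h
      have hgt : ‖g t‖ ≤ |A| * t ^ (k+1) := by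
        calc ‖g t‖ ≤ A * t ^ l := hA t ⟨ht0.le, ht1⟩
          _ ≤ |A| * t ^ l := by
              have := le_abs_self A
              have : A * t ^ l ≤ |A| * t ^ l := by
                apply mul_le_mul_of_nonneg_right this (by positivity)
              linarith
          _ ≤ |A| * t ^ (k+1) := by
              apply mul_le_mul_of_nonneg_left _ (abs_nonneg A)
              exact pow_le_pow_of_le_one ht0.le ht1 hk
      have hrem : ‖((k.factorial : ℝ)⁻¹ * t ^ k) • c‖ ≤ (|A| + M) * t ^ (k+1) := by
        have h1 : ‖((k.factorial : ℝ)⁻¹ * t ^ k) • c‖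
            ≤ ‖g t‖ + ‖g t - ((k.factorial : ℝ)⁻¹ * t ^ k) • c‖ := by
          calc ‖((k.factorial : ℝ)⁻¹ * t ^ k) • c‖
              = ‖g t - (g t - ((k.factorial : ℝ)⁻¹ * t ^ k) • c)‖ := by rw [sub_sub_cancel]
            _ ≤ ‖g t‖ + ‖g t - ((k.factorial : ℝ)⁻¹ * t ^ k) • c‖ := norm_sub_le _ _
        have h2 : ‖g t - ((k.factorial : ℝ)⁻¹ * t ^ k) • c‖ ≤ M * t ^ (k+1) := by
          have := htay
          rw [hpoly] at this
          calc ‖g t - ((k.factorial : ℝ)⁻¹ * t ^ k) • c‖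
              ≤ M * (t - 0) ^ (k+1) / (k.factorial : ℝ) := this
            _ ≤ M * t ^ (k+1) := by
                rw [sub_zero]
                apply div_le_self (by positivity)
                exact_mod_cast Nat.one_le_iff_ne_zero.2 k.factorial_ne_zero
        calc ‖((k.factorial : ℝ)⁻¹ * t ^ k) • c‖ ≤ ‖g t‖ + M * t ^ (k+1) := by linarith
          _ ≤ |A| * t ^ (k+1) + M * t ^ (k+1) := by linarith
          _ = (|A| + M) * t ^ (k+1) := by ring
      -- extract ‖c‖
      have hnorm : ‖((k.factorial : ℝ)⁻¹ * t ^ k) • c‖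
          = (k.factorial : ℝ)⁻¹ * t ^ k * ‖c‖ := by
        rw [norm_smul]
        rw [Real.norm_eq_abs, abs_mul, abs_inv, abs_pow, abs_of_pos ht0]
        simp [Nat.abs_cast]
      rw [hnorm] at hrem
      have hfac : (0:ℝ) < (k.factorial : ℝ) := by positivity
      have htk : (0:ℝ) < t ^ k := by positivity
      have : ‖c‖ ≤ (k.factorial : ℝ) * ((|A| + M) * t ^ (k+1)) / t ^ k := by
        rw [le_div_iff₀ htk]
        calc ‖c‖ * t ^ k = (k.factorial : ℝ) * ((k.factorial : ℝ)⁻¹ * t ^ k * ‖c‖) := by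
              field_simp
          _ ≤ (k.factorial : ℝ) * ((|A| + M) * t ^ (k+1)) := by
              apply mul_le_mul_of_nonneg_left hrem hfac.le
      calc ‖c‖ ≤ (k.factorial : ℝ) * ((|A| + M) * t ^ (k+1)) / t ^ k := this
        _ = D * t := by
            rw [hD]
            field_simp
            ring
    -- conclude ‖c‖ = 0
    have : ‖c‖ ≤ 0 := by
      by_contra h
      push_neg at h
      set t : ℝ := min 1 (‖c‖ / (2 * (D + 1))) with htdef
      have hcpos : 0 < ‖c‖ := h
      have htpos : 0 < t := lt_min one_pos (by positivity)
      have ht1 : t ≤ 1 := min_le_left _ _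
      have hkey := key t ⟨htpos, ht1⟩
      have : D * t ≤ (D + 1) * (‖c‖ / (2 * (D + 1))) := by
        apply mul_le_mul (by linarith) (min_le_right _ _) htpos.le (by linarith)
      have hhalf : (D + 1) * (‖c‖ / (2 * (D + 1))) = ‖c‖ / 2 := by
        field_simp
      rw [hhalf] at this
      linarith
    have := le_antisymm this (norm_nonneg c)
    exact norm_eq_zero.1 this

section Diagonal
open Set Metric
variable {E : Type*} [NormedAddCommGroup E] [NormedSpace ℝ E] [FiniteDimensional ℝ E]

lemma pure_vanish {α : E × E → ℂ} (hsm : ContDiff ℝ (⊤:ℕ∞) α) {l : ℕ}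
    (hbd : ∀ K : Set (E × E), IsCompact K → ∃ C : ℝ, ∀ p ∈ K, ‖α p‖ ≤ C * ‖p.1 - p.2‖ ^ l)
    (z : E) (w : E × E) : ∀ k < l, iteratedFDeriv ℝ k α ((z,z) : E × E) (fun _ => w) = 0 := by
  intro k hk
  obtain ⟨C, hC⟩ := hbd (closedBall ((z,z) : E × E) ‖w‖) (isCompact_closedBall _ _)
  set g : ℝ → ℂ := fun t => α (((z,z) : E × E) + t • w) with hgdef
  have hline : ContDiff ℝ (⊤:ℕ∞) (fun t : ℝ => ((z,z) : E × E) + t • w) :=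
    contDiff_const.add (contDiff_id.smul contDiff_const)
  have hg : ContDiff ℝ (⊤:ℕ∞) g := hsm.comp hline
  have hA : ∀ t ∈ Icc (0:ℝ) 1, ‖g t‖ ≤ (|C| * ‖w.1 - w.2‖ ^ l) * t ^ l := by
    intro t ht
    have hmem : ((z,z) : E × E) + t • w ∈ closedBall ((z,z) : E × E) ‖w‖ := by
      simp only [mem_closedBall, dist_self_add_left, norm_smul, Real.norm_eq_abs]
      calc |t| * ‖w‖ ≤ 1 * ‖w‖ := by
            apply mul_le_mul_of_nonneg_right _ (norm_nonneg w)
            rw [abs_of_nonneg ht.1]; exact ht.2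
        _ = ‖w‖ := one_mul _
    have := hC _ hmem
    have hdiff : ((((z,z) : E × E) + t • w).1 - (((z,z) : E × E) + t • w).2) = t • (w.1 - w.2) := by
      simp [Prod.fst_add, Prod.snd_add, smul_sub]
    rw [hdiff] at this
    calc ‖g t‖ ≤ C * ‖t • (w.1 - w.2)‖ ^ l := this
      _ ≤ |C| * ‖t • (w.1 - w.2)‖ ^ l := by
          apply mul_le_mul_of_nonneg_right (le_abs_self C) (by positivity)
      _ = (|C| * ‖w.1 - w.2‖ ^ l) * t ^ l := by
          rw [norm_smul, Real.norm_eq_abs, abs_of_nonneg ht.1, mul_pow]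
          ring
  have hvan := oneD_vanish hg hA k hk
  rw [iteratedDeriv_line α hsm ((z,z) : E × E) w k 0] at hvan
  simpa using hvan

lemma mixed_vanish (e : E) (w : E × E) :
    ∀ (k : ℕ) (f : E × E → ℂ), ContDiff ℝ (⊤:ℕ∞) f →
    (∀ m ≤ k, ∀ z : E, iteratedFDeriv ℝ m f ((z,z) : E × E) (fun _ => w) = 0) →
    ∀ z : E, iteratedFDeriv ℝ k (Dd f ((e,e) : E × E)) ((z,z) : E × E) (fun _ => w) = 0 := by
  intro k
  induction k with
  | zero =>
    intro f hf hm z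
    rw [iteratedFDeriv_zero_apply]
    have h1 := hasDerivAt_line f hf ((z,z) : E × E) ((e,e) : E × E) 0
    have h2 : (fun s : ℝ => f (((z,z) : E × E) + s • ((e,e) : E × E))) = fun _ => (0:ℂ) := by
      funext s
      have : ((z,z) : E × E) + s • ((e,e) : E × E) = ((z + s • e, z + s • e) : E × E) := rfl
      rw [this]
      have := hm 0 le_rfl (z + s • e)
      simpa using this
    rw [h2] at h1
    have h3 := h1.unique (hasDerivAt_const 0 (0:ℂ))
    simpa using h3
  | succ k ih =>
    intro f hf hm z
    rw [show k + 1 = k + 1 from rfl, peel (contDiff_Dd hf _) w k, Dd_comm hf _ w]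
    apply ih (Dd f w) (contDiff_Dd hf w) _ z
    intro m hmk z'
    rw [← peel hf w m]
    exact hm (m+1) (by omega) z'

end Diagonal


open Set Metric in
/-- The key intermediate claim in the proof of Lemma 3.2: if `α` is smooth and satisfies
`|α(x,y)| ≤ C|x-y|^ℓ` locally uniformly, then the tangential derivative
`Lⱼα = ∂α/∂xⱼ + ∂α/∂yⱼ` is smooth and satisfies the same type of estimate. -/
theorem stmt1 (N ℓ : ℕ) (hN : 1 ≤ N)
    (α : (EuclideanSpace ℝ (Fin N)) × (EuclideanSpace ℝ (Fin N)) → ℂ)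
    (hsm : ContDiff ℝ (⊤ : ℕ∞) α)
    (hbd : ∀ K : Set ((EuclideanSpace ℝ (Fin N)) × (EuclideanSpace ℝ (Fin N))),
      IsCompact K → ∃ C : ℝ, ∀ p ∈ K, ‖α p‖ ≤ C * ‖p.1 - p.2‖ ^ ℓ)
    (j : Fin N) :
    ContDiff ℝ (⊤ : ℕ∞) (fun p => fderiv ℝ α p
        (EuclideanSpace.single j (1 : ℝ), EuclideanSpace.single j (1 : ℝ))) ∧
    ∀ K : Set ((EuclideanSpace ℝ (Fin N)) × (EuclideanSpace ℝ (Fin N))),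
      IsCompact K → ∃ C' : ℝ, ∀ p ∈ K,
        ‖fderiv ℝ α p (EuclideanSpace.single j (1 : ℝ), EuclideanSpace.single j (1 : ℝ))‖
          ≤ C' * ‖p.1 - p.2‖ ^ ℓ := by
  set v : (EuclideanSpace ℝ (Fin N) × EuclideanSpace ℝ (Fin N)) := (EuclideanSpace.single j (1 : ℝ), EuclideanSpace.single j (1 : ℝ)) with hv
  have hβ : ContDiff ℝ (⊤:ℕ∞) (Dd α v) := contDiff_Dd hsm v
  constructor
  · exact hβ
  intro K hK
  rcases ℓ with _ | m
  · -- ℓ = 0 : continuity suffices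
    obtain ⟨C, hC⟩ := hK.exists_bound_of_continuousOn hβ.continuous.continuousOn
    exact ⟨C, fun p hp => by simpa [Dd] using hC p hp⟩
  · set l := m + 1 with hl
    obtain ⟨R0, hR0⟩ := hK.isBounded.subset_closedBall (0 : (EuclideanSpace ℝ (Fin N) × EuclideanSpace ℝ (Fin N)))
    set R : ℝ := max R0 0 with hR
    have hRnn : 0 ≤ R := le_max_right _ _
    have hKR : K ⊆ closedBall (0 : (EuclideanSpace ℝ (Fin N) × EuclideanSpace ℝ (Fin N))) R :=
      hR0.trans (closedBall_subset_closedBall (le_max_left _ _))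
    obtain ⟨M0, hM0⟩ := (isCompact_closedBall (0 : (EuclideanSpace ℝ (Fin N) × EuclideanSpace ℝ (Fin N))) (3*R+1)).exists_bound_of_continuousOn
      (hβ.continuous_iteratedFDeriv (m := l) (by norm_cast; exact le_top)).continuousOn
    set M : ℝ := max M0 0 with hM
    have hMnn : 0 ≤ M := le_max_right _ _
    refine ⟨M, fun p hp => ?_⟩
    set x : EuclideanSpace ℝ (Fin N) := p.1 with hx
    set y : EuclideanSpace ℝ (Fin N) := p.2 with hy
    set z : EuclideanSpace ℝ (Fin N) := (2⁻¹ : ℝ) • (x + y) with hz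
    set c : (EuclideanSpace ℝ (Fin N) × EuclideanSpace ℝ (Fin N)) := ((z, z) : (EuclideanSpace ℝ (Fin N) × EuclideanSpace ℝ (Fin N))) with hc
    set w : (EuclideanSpace ℝ (Fin N) × EuclideanSpace ℝ (Fin N)) := p - c with hw
    have hw1 : w.1 = (2⁻¹ : ℝ) • (x - y) := by
      show p.1 - z = _
      rw [hz]; module
    have hw2 : w.2 = -((2⁻¹ : ℝ) • (x - y)) := by
      show p.2 - z = _
      rw [hz]; module
    have hwn : ‖w‖ ≤ ‖x - y‖ := by
      have h1 : ‖w.1‖ ≤ ‖x - y‖ := by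
        rw [hw1, norm_smul]
        simp only [Real.norm_eq_abs]
        rw [abs_of_pos (by norm_num : (0:ℝ) < 2⁻¹)]
        nlinarith [norm_nonneg (x - y)]
      have h2 : ‖w.2‖ ≤ ‖x - y‖ := by
        rw [hw2, norm_neg, norm_smul]
        simp only [Real.norm_eq_abs]
        rw [abs_of_pos (by norm_num : (0:ℝ) < 2⁻¹)]
        nlinarith [norm_nonneg (x - y)]
      calc ‖w‖ = max ‖w.1‖ ‖w.2‖ := rfl
        _ ≤ ‖x - y‖ := max_le h1 h2
    have hpn : ‖p‖ ≤ R := by simpa using mem_closedBall_zero_iff.1 (hKR hp)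
    have hxn : ‖x‖ ≤ R := (norm_fst_le p).trans hpn
    have hyn : ‖y‖ ≤ R := (norm_snd_le p).trans hpn
    have hzn : ‖z‖ ≤ R := by
      rw [hz, norm_smul]
      simp only [Real.norm_eq_abs]
      calc |(2⁻¹:ℝ)| * ‖x + y‖ ≤ 2⁻¹ * (‖x‖ + ‖y‖) := by
            rw [abs_of_pos (by norm_num : (0:ℝ) < 2⁻¹)]
            exact mul_le_mul_of_nonneg_left (norm_add_le x y) (by norm_num)
        _ ≤ R := by linarith
    have hcn : ‖c‖ ≤ R := by
      calc ‖c‖ = max ‖z‖ ‖z‖ := rfl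
        _ ≤ R := max_le hzn hzn
    have hwn2 : ‖w‖ ≤ 2 * R := by
      calc ‖w‖ = ‖p - c‖ := rfl
        _ ≤ ‖p‖ + ‖c‖ := norm_sub_le _ _
        _ ≤ 2 * R := by linarith
    have hmem : ∀ t ∈ Icc (0:ℝ) 1, c + t • w ∈ closedBall (0 : (EuclideanSpace ℝ (Fin N) × EuclideanSpace ℝ (Fin N))) (3*R+1) := by
      intro t ht
      rw [mem_closedBall_zero_iff]
      calc ‖c + t • w‖ ≤ ‖c‖ + ‖t • w‖ := norm_add_le _ _
        _ ≤ R + |t| * ‖w‖ := by rw [norm_smul, Real.norm_eq_abs]; linarith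
        _ ≤ R + 1 * (2*R) := by
            have : |t| ≤ 1 := by rw [abs_of_nonneg ht.1]; exact ht.2
            have := mul_le_mul this hwn2 (norm_nonneg w) zero_le_one
            linarith
        _ ≤ 3*R+1 := by linarith
    set h : ℝ → ℂ := fun t => Dd α v (c + t • w) with hhdef
    have hline : ContDiff ℝ (⊤:ℕ∞) (fun t : ℝ => c + t • w) :=
      contDiff_const.add (contDiff_id.smul contDiff_const)
    have hhsm : ContDiff ℝ (⊤:ℕ∞) h := hβ.comp hline
    have hud : UniqueDiffOn ℝ (Icc (0:ℝ) 1) := uniqueDiffOn_Icc one_pos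
    have hC' : ∀ t ∈ Icc (0:ℝ) 1,
        ‖iteratedDerivWithin (m+1) h (Icc 0 1) t‖ ≤ M * ‖w‖ ^ l := by
      intro t ht
      rw [iterDerivWithin_eq h hhsm hud ht]
      rw [show iteratedDeriv (m+1) h t
          = iteratedFDeriv ℝ (m+1) (Dd α v) (c + t • w) (fun _ => w) from
          iteratedDeriv_line (Dd α v) hβ c w (m+1) t]
      calc ‖iteratedFDeriv ℝ (m+1) (Dd α v) (c + t • w) (fun _ => w)‖
          ≤ ‖iteratedFDeriv ℝ (m+1) (Dd α v) (c + t • w)‖ * ∏ _i : Fin (m+1), ‖w‖ :=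
            ContinuousMultilinearMap.le_opNorm _ _
        _ ≤ M * ‖w‖ ^ l := by
            rw [Finset.prod_const]
            simp only [Finset.card_univ, Fintype.card_fin]
            apply mul_le_mul_of_nonneg_right _ (by positivity)
            exact ((hM0 _ (hmem t ht))).trans (le_max_left _ _)
    have htay := taylor_mean_remainder_bound (f := h) (a := 0) (b := 1) (x := 1)
      (n := m) (C := M * ‖w‖ ^ l) zero_le_one
      ((hhsm.of_le (by norm_cast; exact le_top)).contDiffOn)
      (right_mem_Icc.2 zero_le_one) hC'
    have hpoly : taylorWithinEval h m (Icc (0:ℝ) 1) 0 1 = 0 := by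
      rw [taylor_within_apply]
      apply Finset.sum_eq_zero
      intro i hi
      have hi' : i < l := by
        have := Finset.mem_range.1 hi
        omega
      rw [iterDerivWithin_eq h hhsm hud (left_mem_Icc.2 zero_le_one)]
      rw [show iteratedDeriv i h 0
          = iteratedFDeriv ℝ i (Dd α v) (c + (0:ℝ) • w) (fun _ => w) from
          iteratedDeriv_line (Dd α v) hβ c w i 0]
      have h0 : c + (0:ℝ) • w = c := by simp
      rw [h0, hc]
      rw [mixed_vanish (EuclideanSpace.single j (1:ℝ)) w i α hsm
        (fun m' _ z' => pure_vanish hsm hbd z' w m' (by omega)) z]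
      simp
    rw [hpoly, sub_zero] at htay
    have hh1 : h 1 = Dd α v p := by
      rw [hhdef]
      simp only [one_smul, hw]
      congr 1
      abel
    rw [hh1] at htay
    calc ‖fderiv ℝ α p v‖ = ‖Dd α v p‖ := rfl
      _ ≤ M * ‖w‖ ^ l * (1 - 0) ^ (m+1) / (m.factorial : ℝ) := htay
      _ ≤ M * ‖w‖ ^ l := by
          rw [sub_zero, one_pow, mul_one]
          apply div_le_self (by positivity)
          exact_mod_cast Nat.one_le_iff_ne_zero.2 m.factorial_ne_zero
      _ ≤ M * ‖x - y‖ ^ l := by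
          apply mul_le_mul_of_nonneg_left _ hMnn
          exact pow_le_pow_left₀ (norm_nonneg w) hwn l
end

section
/- Let $N \ge 1$ be an integer, $\nu \ge 0$ an integer, and let $\Phi:\mathbb{R}^N\times\mathbb{R}^N\to[0,\infty)$ be such that $\Phi^2$ is smooth and $c_1|x-y|^2 \le \Phi(x,y)^2 \le c_2|x-y|^2$ for constants $0<c_1\le c_2$. Let $J$ be finite and for each $j\in J$ let $\ell_j\ge 0$ be an integer and $\alpha_j$ a smooth function on $\mathbb{R}^N\times\mathbb{R}^N$ with, locally uniformly, $|\alpha_j(x,y)|\le C|x-y|^{\ell_j}$, and set $\mathcal{E}=\sum_{j}\alpha_j/\Phi^{\nu+\ell_j}$ on $\{x\ne y\}$. Then for each $k\in\{1,\dots,N\}$, on $\{x\ne y\}$ the function $L_k\mathcal{E} = \partial\mathcal{E}/\partial x_k + \partial\mathcal{E}/\partial y_k$ is again of the same form: there are a finite index set $J'$, integers $\ell'_i\ge 0$, and smooth functions $\alpha'_i$ on $\mathbb{R}^N\times\mathbb{R}^N$ with, locally uniformly, $|\alpha'_i(x,y)|\le C'|x-y|^{\ell'_i}$, such that $L_k\mathcal{E}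 = \sum_{i\in J'}\alpha'_i/\Phi^{\nu+\ell'_i}$ on $\{x\ne y\}$. -/
open Set Function
variable {F : Type*} [NormedAddCommGroup F] [NormedSpace ℝ F]


lemma smooth_deriv {g : ℝ → F} (hg : ContDiff ℝ (⊤:ℕ∞) g) : ContDiff ℝ (⊤:ℕ∞) (deriv g) :=
  (contDiff_infty_iff_deriv.mp hg).2

lemma oneD_bound_nonneg (m : ℕ) : ∀ (g : ℝ → F), ContDiff ℝ (⊤:ℕ∞) g →
    (∀ j < m, iteratedDeriv j g 0 = 0) → ∀ (M a : ℝ),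
    (∀ s : ℝ, |s| ≤ a → ‖iteratedDeriv m g s‖ ≤ M) →
    ∀ s : ℝ, 0 ≤ s → s ≤ a → ‖g s‖ ≤ M * s ^ m := by
  induction m with
  | zero => intro g hg h0 M a hM s hs0 hs; simpa using hM s (by rwa [abs_of_nonneg hs0])
  | succ m ih =>
    intro g hg h0 M a hM s hs0 hs
    have hM0 : 0 ≤ M := le_trans (norm_nonneg _) (hM s (by rwa [abs_of_nonneg hs0]))
    have hd : ∀ j < m, iteratedDeriv j (deriv g) 0 = 0 := by
      intro j hj; rw [← iteratedDeriv_succ']; exact h0 (j+1) (by omega)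
    have hMd : ∀ t : ℝ, |t| ≤ a → ‖iteratedDeriv m (deriv g) t‖ ≤ M := by
      intro t ht; rw [← iteratedDeriv_succ']; exact hM t ht
    have hdb : ∀ t : ℝ, 0 ≤ t → t ≤ s → ‖deriv g t‖ ≤ M * s ^ m := by
      intro t ht0 ht
      calc ‖deriv g t‖ ≤ M * t ^ m :=
            ih (deriv g) (smooth_deriv hg) hd M a hMd t ht0 (le_trans ht hs)
        _ ≤ M * s ^ m := mul_le_mul_of_nonneg_left (pow_le_pow_left₀ ht0 ht m) hM0
    have hg0 : g 0 = 0 := by simpa using h0 0 (Nat.succ_pos m)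
    have hdiff : ∀ t : ℝ, HasDerivAt g (deriv g t) t :=
      fun t => ((hg.differentiable (by simp)) t).hasDerivAt
    have := norm_image_sub_le_of_norm_deriv_le_segment' (a := 0) (b := s) (f := g)
      (f' := deriv g) (C := M * s ^ m)
      (fun t ht => (hdiff t).hasDerivWithinAt)
      (fun t ht => hdb t ht.1 (le_of_lt ht.2))
      s (by constructor <;> simp [hs0])
    rw [hg0, sub_zero, sub_zero] at this
    calc ‖g s‖ ≤ M * s^m * s := this
      _ = M * s^(m+1) := by ring

lemma oneD_bound (m : ℕ) (g : ℝ → F) (hg : ContDiff ℝ (⊤:ℕ∞) g)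
    (h0 : ∀ j < m, iteratedDeriv j g 0 = 0) (M a : ℝ)
    (hM : ∀ s : ℝ, |s| ≤ a → ‖iteratedDeriv m g s‖ ≤ M) :
    ∀ s : ℝ, |s| ≤ a → ‖g s‖ ≤ M * |s| ^ m := by
  intro s hs
  rcases le_or_gt 0 s with h | h
  · rw [abs_of_nonneg h]
    exact oneD_bound_nonneg m g hg h0 M a hM s h (le_trans (le_abs_self s) hs)
  · set g2 : ℝ → F := fun t => g (-t) with hg2
    have hg2s : ContDiff ℝ (⊤:ℕ∞) g2 := hg.comp (contDiff_neg)
    have h02 : ∀ j < m, iteratedDeriv j g2 0 = 0 := by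
      intro j hj
      rw [hg2, iteratedDeriv_comp_neg, neg_zero, h0 j hj, smul_zero]
    have hM2 : ∀ s : ℝ, |s| ≤ a → ‖iteratedDeriv m g2 s‖ ≤ M := by
      intro t ht
      rw [hg2, iteratedDeriv_comp_neg, norm_smul]
      have : ‖((-1:ℝ))^m‖ = 1 := by simp
      rw [this, one_mul]
      exact hM (-t) (by rwa [abs_neg])
    have := oneD_bound_nonneg m g2 hg2s h02 M a hM2 (-s) (by linarith)
      (le_trans (by rw [← abs_neg s]; exact le_abs_self (-s)) hs)
    rw [abs_of_neg h]
    simpa [hg2] using this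


lemma iter_monomial (c : F) (r : ℕ) : ∀ j : ℕ,
    iteratedDeriv j (fun s : ℝ => s ^ r • c) = fun s => ((r.descFactorial j : ℝ) * s ^ (r - j)) • c := by
  intro j
  induction j with
  | zero => funext s; simp
  | succ j ihj =>
    funext s
    rw [iteratedDeriv_succ, ihj]
    have : ∀ t : ℝ, HasDerivAt (fun s : ℝ => ((r.descFactorial j : ℝ) * s ^ (r - j)) • c)
        (((r.descFactorial j : ℝ) * ((r - j : ℕ) * t ^ (r - j - 1))) • c) t := by
      intro t
      have h1 : HasDerivAt (fun s : ℝ => s ^ (r-j)) ((r - j : ℕ) * t ^ (r - j - 1)) t := by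
        simpa using hasDerivAt_pow (r-j) t
      exact (h1.const_mul ((r.descFactorial j : ℝ))).smul_const c
    rw [(this s).deriv, Nat.descFactorial_succ]
    have hrj : r - (j+1) = r - j - 1 := by omega
    rw [hrj]
    congr 1
    push_cast
    ring

lemma coe_le_infty (n : ℕ) : (n : WithTop ℕ∞) ≤ ((⊤:ℕ∞) : WithTop ℕ∞) := by
  exact_mod_cast le_top

lemma iteratedDeriv_sub' {n : ℕ} {f g : ℝ → F} (hf : ContDiff ℝ (⊤:ℕ∞) f)
    (hg : ContDiff ℝ (⊤:ℕ∞) g) (x : ℝ) :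
    iteratedDeriv n (fun s => f s - g s) x = iteratedDeriv n f x - iteratedDeriv n g x := by
  simp_rw [← iteratedDerivWithin_univ]
  exact iteratedDerivWithin_sub (mem_univ x) uniqueDiffOn_univ
    ((hf.of_le (coe_le_infty n)).contDiffWithinAt) ((hg.of_le (coe_le_infty n)).contDiffWithinAt)

lemma oneD_vanish_s2 (ℓ : ℕ) (g : ℝ → F) (hg : ContDiff ℝ (⊤:ℕ∞) g) (C a : ℝ) (ha : 0 < a)
    (hb : ∀ s : ℝ, |s| ≤ a → ‖g s‖ ≤ C * |s| ^ ℓ) :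
    ∀ r, r < ℓ → iteratedDeriv r g 0 = 0 := by
  intro r
  induction r using Nat.strong_induction_on with
  | _ r IH =>
    intro hr
    set c := iteratedDeriv r g 0 with hc
    set mono : ℝ → F := fun s => s ^ r • ((Nat.factorial r : ℝ)⁻¹ • c) with hmono
    have hmonos : ContDiff ℝ (⊤:ℕ∞) mono := (contDiff_id.pow r).smul contDiff_const
    set G : ℝ → F := fun s => g s - mono s with hG
    have hGs : ContDiff ℝ (⊤:ℕ∞) G := hg.sub hmonos
    -- low derivatives of G vanish
    have hG0 : ∀ j < r + 1, iteratedDeriv j G 0 = 0 := by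
      intro j hj
      rw [hG, iteratedDeriv_sub' hg hmonos, hmono, iter_monomial]
      simp only
      rcases Nat.lt_or_ge j r with h | h
      · rw [IH j h (lt_trans h hr)]
        have : (0:ℝ) ^ (r - j) = 0 := by
          apply zero_pow; omega
        simp [this]
      · have hjr : j = r := by omega
        subst hjr
        rw [Nat.sub_self, pow_zero, Nat.descFactorial_self, mul_one, smul_smul,
          mul_inv_cancel₀ (by positivity : (Nat.factorial j : ℝ) ≠ 0), one_smul, ← hc, sub_self]
    -- sup bound for iteratedDeriv (r+1) G on [-a,a]
    obtain ⟨M, hM⟩ : ∃ M, ∀ s ∈ Icc (-a) a, ‖iteratedDeriv (r+1) G s‖ ≤ M := by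
      exact (isCompact_Icc (a := -a) (b := a)).exists_bound_of_continuousOn
        ((hGs.continuous_iteratedDeriv (r+1) (by exact_mod_cast le_top)).continuousOn)
    have hGb : ∀ s : ℝ, |s| ≤ a → ‖G s‖ ≤ M * |s| ^ (r+1) :=
      oneD_bound (r+1) G hGs hG0 M a (fun s hs => hM s (abs_le.mp hs |> fun h => ⟨h.1, h.2⟩))
    -- conclude c = 0
    have key : ∀ s : ℝ, 0 < s → s ≤ min a 1 → (Nat.factorial r : ℝ)⁻¹ * ‖c‖ ≤ (max C 0 + max M 0) * s := by
      intro s hs0 hs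
      have hsa : |s| ≤ a := by rw [abs_of_pos hs0]; exact le_trans hs (min_le_left _ _)
      have h1 : ‖mono s‖ ≤ ‖g s‖ + ‖G s‖ := by
        have : mono s = g s - G s := by rw [hG]; rw [sub_sub_cancel]
        rw [this]; exact norm_sub_le _ _
      have h2 : ‖mono s‖ = s ^ r * ((Nat.factorial r : ℝ)⁻¹ * ‖c‖) := by
        calc ‖mono s‖ = |s ^ r| * ‖((Nat.factorial r : ℝ))⁻¹ • c‖ := by
              rw [hmono]; simp only; rw [norm_smul, Real.norm_eq_abs]
          _ = |s ^ r| * (|((Nat.factorial r : ℝ))⁻¹| * ‖c‖) := by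
              rw [norm_smul, Real.norm_eq_abs]
          _ = s ^ r * ((Nat.factorial r : ℝ)⁻¹ * ‖c‖) := by
              rw [abs_pow, abs_of_pos hs0, abs_inv, Nat.abs_cast]
      have h3 : ‖g s‖ ≤ max C 0 * s ^ (r+1) := by
        calc ‖g s‖ ≤ C * |s| ^ ℓ := hb s hsa
          _ ≤ max C 0 * |s| ^ ℓ := by
              apply mul_le_mul_of_nonneg_right (le_max_left _ _) (by positivity)
          _ ≤ max C 0 * |s| ^ (r+1) := by
              apply mul_le_mul_of_nonneg_left _ (le_max_right C 0)
              apply pow_le_pow_of_le_one (abs_nonneg _) _ hr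
              rw [abs_of_pos hs0]; exact le_trans hs (min_le_right _ _)
          _ = max C 0 * s ^ (r+1) := by rw [abs_of_pos hs0]
      have h4 : ‖G s‖ ≤ max M 0 * s ^ (r+1) := by
        calc ‖G s‖ ≤ M * |s| ^ (r+1) := hGb s hsa
          _ ≤ max M 0 * |s| ^ (r+1) := by
              apply mul_le_mul_of_nonneg_right (le_max_left _ _) (by positivity)
          _ = max M 0 * s ^ (r+1) := by rw [abs_of_pos hs0]
      have h5 : s ^ r * ((Nat.factorial r : ℝ)⁻¹ * ‖c‖) ≤ (max C 0 + max M 0) * s ^ (r+1) := by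
        calc s ^ r * ((Nat.factorial r : ℝ)⁻¹ * ‖c‖) ≤ ‖g s‖ + ‖G s‖ := h2 ▸ h1
          _ ≤ max C 0 * s ^ (r+1) + max M 0 * s ^ (r+1) := add_le_add h3 h4
          _ = (max C 0 + max M 0) * s ^ (r+1) := by ring
      have hsr : 0 < s ^ r := by positivity
      rw [pow_succ] at h5
      rw [show (max C 0 + max M 0) * (s ^ r * s) = s ^ r * ((max C 0 + max M 0) * s) from by ring] at h5
      exact le_of_mul_le_mul_left h5 hsr
    -- limit as s → 0
    have hc0 : ‖c‖ ≤ 0 := by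
      by_contra hpos
      push_neg at hpos
      set K := max C 0 + max M 0 with hK
      have hK0 : 0 ≤ K := by positivity
      set b := (Nat.factorial r : ℝ)⁻¹ * ‖c‖ with hb'
      have hb0 : 0 < b := by positivity
      set s := min (min a 1) (b / (2 * (K + 1))) with hs
      have hs0 : 0 < s := by
        apply lt_min (lt_min ha one_pos)
        positivity
      have := key s hs0 (min_le_left _ _)
      have h2 : K * s ≤ K * (b / (2 * (K + 1))) :=
        mul_le_mul_of_nonneg_left (min_le_right _ _) hK0
      have h3 : K * (b / (2 * (K + 1))) < b := by
        have hD : (0:ℝ) < 2 * (K + 1) := by positivity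
        have hx : 0 < b / (2 * (K + 1)) := by positivity
        have hxb : b = (b / (2 * (K + 1))) * (2 * (K + 1)) := by field_simp
        nlinarith [hx]
      exact absurd (lt_of_le_of_lt (le_trans this h2) h3) (lt_irrefl b)
    have := norm_nonneg c
    have : ‖c‖ = 0 := le_antisymm hc0 (norm_nonneg c)
    exact norm_eq_zero.mp this

section Dir
variable {V : Type*} [NormedAddCommGroup V] [NormedSpace ℝ V]

lemma infty_add_one_le : ((⊤:ℕ∞) : WithTop ℕ∞) + 1 ≤ ((⊤:ℕ∞) : WithTop ℕ∞) := by
  norm_cast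

lemma one_le_infty : (1 : WithTop ℕ∞) ≤ ((⊤:ℕ∞) : WithTop ℕ∞) := by
  exact_mod_cast le_top

noncomputable def dirD (q : V) (u : V → F) : V → F := fun x => fderiv ℝ u x q

lemma smooth_dir {u : V → F} (hu : ContDiff ℝ (⊤:ℕ∞) u) (q : V) :
    ContDiff ℝ (⊤:ℕ∞) (dirD q u) :=
  (hu.fderiv_right infty_add_one_le).clm_apply contDiff_const

lemma smooth_dir_iter (q : V) (r : ℕ) : ∀ u : V → F, ContDiff ℝ (⊤:ℕ∞) u →
    ContDiff ℝ (⊤:ℕ∞) ((dirD q)^[r] u) := by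
  induction r with
  | zero => intro u hu; exact hu
  | succ r ih =>
    intro u hu
    rw [Function.iterate_succ_apply]
    exact ih (dirD q u) (smooth_dir hu q)

lemma hasDerivAt_line_s2 {u : V → F} (hu : ContDiff ℝ (⊤:ℕ∞) u) (x₀ q : V) (s : ℝ) :
    HasDerivAt (fun t : ℝ => u (x₀ + t • q)) (fderiv ℝ u (x₀ + s • q) q) s := by
  have h1 : HasDerivAt (fun t : ℝ => x₀ + t • q) q s := by
    simpa using ((hasDerivAt_id s).smul_const q).const_add x₀
  have h2 := ((hu.differentiable (by simp)) (x₀ + s • q)).hasFDerivAt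
  exact h2.comp_hasDerivAt s h1

lemma deriv_line_s2 {u : V → F} (hu : ContDiff ℝ (⊤:ℕ∞) u) (x₀ q : V) :
    deriv (fun t : ℝ => u (x₀ + t • q)) = fun s => dirD q u (x₀ + s • q) := by
  funext s
  exact (hasDerivAt_line_s2 hu x₀ q s).deriv

lemma line_iteratedDeriv (q : V) (r : ℕ) : ∀ u : V → F, ContDiff ℝ (⊤:ℕ∞) u → ∀ (x₀ : V) (s₀ : ℝ),
    iteratedDeriv r (fun s : ℝ => u (x₀ + s • q)) s₀ = (dirD q)^[r] u (x₀ + s₀ • q) := by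
  induction r with
  | zero => intro u hu x₀ s₀; simp
  | succ r ih =>
    intro u hu x₀ s₀
    rw [iteratedDeriv_succ', deriv_line_s2 hu x₀ q]
    rw [Function.iterate_succ_apply]
    exact ih (dirD q u) (smooth_dir hu q) x₀ s₀

lemma dir_swap (q v : V) {u : V → F} (hu : ContDiff ℝ (⊤:ℕ∞) u) (x : V) :
    fderiv ℝ (dirD q u) x v = fderiv ℝ (dirD v u) x q := by
  have hdu : ContDiff ℝ (⊤:ℕ∞) (fderiv ℝ u) := hu.fderiv_right infty_add_one_le
  have hdud : DifferentiableAt ℝ (fderiv ℝ u) x := (hdu.differentiable (by simp)) x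
  have hq : fderiv ℝ (dirD q u) x = (fderiv ℝ (fderiv ℝ u) x).flip q := by
    unfold dirD
    rw [fderiv_clm_apply hdud (differentiableAt_const q)]
    simp
  have hv : fderiv ℝ (dirD v u) x = (fderiv ℝ (fderiv ℝ u) x).flip v := by
    unfold dirD
    rw [fderiv_clm_apply hdud (differentiableAt_const v)]
    simp
  rw [hq, hv]
  show (fderiv ℝ (fderiv ℝ u) x) v q = (fderiv ℝ (fderiv ℝ u) x) q v
  exact second_derivative_symmetric
    (f := u) (f' := fderiv ℝ u)
    (fun y => ((hu.differentiable (by simp)) y).hasFDerivAt)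
    (hdud.hasFDerivAt) v q

lemma dir_comm (q v : V) (r : ℕ) : ∀ u : V → F, ContDiff ℝ (⊤:ℕ∞) u → ∀ x : V,
    fderiv ℝ ((dirD q)^[r] u) x v = (dirD q)^[r] (dirD v u) x := by
  induction r with
  | zero => intro u hu x; rfl
  | succ r ih =>
    intro u hu x
    rw [Function.iterate_succ_apply]
    rw [ih (dirD q u) (smooth_dir hu q) x]
    have : dirD v (dirD q u) = dirD q (dirD v u) := by
      funext y
      exact dir_swap q v hu y
    rw [this, ← Function.iterate_succ_apply]

lemma dir_iter_eq_iteratedFDeriv (q : V) (r : ℕ) : ∀ u : V → F, ContDiff ℝ (⊤:ℕ∞) u → ∀ x : V,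
    (dirD q)^[r] u x = iteratedFDeriv ℝ r u x (fun _ => q) := by
  induction r with
  | zero => intro u hu x; simp
  | succ r ih =>
    intro u hu x
    rw [Function.iterate_succ_apply, ih (dirD q u) (smooth_dir hu q) x]
    have hcomp : dirD q u = (ContinuousLinearMap.apply ℝ F q) ∘ (fderiv ℝ u) := by
      funext y; rfl
    rw [hcomp, ContinuousLinearMap.iteratedFDeriv_comp_left _
      ((hu.fderiv_right infty_add_one_le).contDiffAt (x := x)) (by exact_mod_cast le_top)]
    rw [iteratedFDeriv_succ_apply_right]
    rfl

lemma dir_iter_norm (q : V) (r : ℕ) (u : V → F) (hu : ContDiff ℝ (⊤:ℕ∞) u) (x : V) :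
    ‖(dirD q)^[r] u x‖ ≤ ‖iteratedFDeriv ℝ r u x‖ * ‖q‖ ^ r := by
  rw [dir_iter_eq_iteratedFDeriv q r u hu x]
  calc ‖iteratedFDeriv ℝ r u x (fun _ => q)‖
      ≤ ‖iteratedFDeriv ℝ r u x‖ * ∏ _i : Fin r, ‖q‖ :=
        (iteratedFDeriv ℝ r u x).le_opNorm _
    _ = ‖iteratedFDeriv ℝ r u x‖ * ‖q‖ ^ r := by
        rw [Finset.prod_const]; simp

end Dir

section Key
variable {W : Type*} [NormedAddCommGroup W] [NormedSpace ℝ W] [ProperSpace (W × W)]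

lemma key_bound (ℓ : ℕ) (f : W × W → F) (hf : ContDiff ℝ (⊤:ℕ∞) f)
    (hbd : ∀ K : Set (W × W), IsCompact K → ∃ C, ∀ p ∈ K, ‖f p‖ ≤ C * ‖p.1 - p.2‖ ^ ℓ)
    (v : W × W) (hv : v.1 = v.2) :
    ∀ K : Set (W × W), IsCompact K → ∃ C, ∀ p ∈ K, ‖fderiv ℝ f p v‖ ≤ C * ‖p.1 - p.2‖ ^ ℓ := by
  intro K hK
  set h : W × W → F := dirD v f with hh
  have hhs : ContDiff ℝ (⊤:ℕ∞) h := smooth_dir hf v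
  obtain ⟨R₀, hR₀⟩ := hK.isBounded.subset_closedBall (0 : W × W)
  set R : ℝ := max R₀ 0 with hRdef
  set ρ : ℝ := 2 * R + ‖v‖ + 1 with hρ
  have hKball : IsCompact (Metric.closedBall (0 : W × W) ρ) := isCompact_closedBall _ _
  obtain ⟨C'', hC''⟩ := hbd _ hKball
  obtain ⟨M, hM⟩ := hKball.exists_bound_of_continuousOn
    ((hhs.continuous_iteratedFDeriv (m := ℓ) (by exact_mod_cast le_top)).continuousOn)
  refine ⟨max M 0, ?_⟩
  intro p hp
  set w : W := p.1 - p.2 with hwdef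
  set σp : W × W := (p.2, p.1) with hσ
  set m : W × W := (2⁻¹ : ℝ) • (p + σp) with hmdef
  set q : W × W := (2⁻¹ : ℝ) • (p - σp) with hqdef
  have hp' : ‖p‖ ≤ R := by
    have := hR₀ hp
    rw [Metric.mem_closedBall, dist_zero_right] at this
    exact le_trans this (le_max_left _ _)
  have hσn : ‖σp‖ = ‖p‖ := by
    rw [hσ, Prod.norm_def, Prod.norm_def, max_comm]
  have hmn : ‖m‖ ≤ R := by
    rw [hmdef]
    calc ‖(2⁻¹ : ℝ) • (p + σp)‖ = 2⁻¹ * ‖p + σp‖ := by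
          rw [norm_smul]; norm_num
      _ ≤ 2⁻¹ * (‖p‖ + ‖σp‖) := by
          apply mul_le_mul_of_nonneg_left (norm_add_le _ _) (by norm_num)
      _ ≤ R := by rw [hσn]; linarith
  have hqw : ‖q‖ ≤ ‖w‖ := by
    rw [hqdef]
    have h1 : ‖p - σp‖ = ‖w‖ := by
      rw [Prod.norm_def]
      have e1 : (p - σp).1 = w := by rw [hσ, hwdef]; rfl
      have e2 : (p - σp).2 = -w := by
        rw [hσ, hwdef]
        show p.2 - p.1 = -(p.1 - p.2)
        abel
      rw [e1, e2, norm_neg, max_self]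
    calc ‖(2⁻¹ : ℝ) • (p - σp)‖ = 2⁻¹ * ‖w‖ := by rw [norm_smul, h1]; norm_num
      _ ≤ ‖w‖ := by
        have := norm_nonneg w
        linarith
  have hqR : ‖q‖ ≤ R := by
    rw [hqdef]
    calc ‖(2⁻¹ : ℝ) • (p - σp)‖ = 2⁻¹ * ‖p - σp‖ := by rw [norm_smul]; norm_num
      _ ≤ 2⁻¹ * (‖p‖ + ‖σp‖) := by
          apply mul_le_mul_of_nonneg_left (norm_sub_le _ _) (by norm_num)
      _ ≤ R := by rw [hσn]; linarith
  have hm12 : m.1 - m.2 = 0 := by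
    rw [hmdef, hσ]
    show (2⁻¹ : ℝ) • (p.1 + p.2) - (2⁻¹ : ℝ) • (p.2 + p.1) = 0
    rw [add_comm p.1 p.2]
    abel
  have hq12 : q.1 - q.2 = w := by
    rw [hqdef, hσ, hwdef]
    show (2⁻¹ : ℝ) • (p.1 - p.2) - (2⁻¹ : ℝ) • (p.2 - p.1) = p.1 - p.2
    module
  have hmqp : m + q = p := by
    rw [hmdef, hqdef]
    module
  -- Step A
  have stepA : ∀ t : ℝ, |t| ≤ 1 → ∀ r, r < ℓ → (dirD q)^[r] f (m + t • v) = 0 := by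
    intro t ht r hr
    have hφs : ContDiff ℝ (⊤:ℕ∞) (fun s : ℝ => f ((m + t • v) + s • q)) :=
      hf.comp (contDiff_const.add (contDiff_id.smul contDiff_const))
    have hφb : ∀ s : ℝ, |s| ≤ 1 → ‖f ((m + t • v) + s • q)‖ ≤ (C'' * ‖w‖ ^ ℓ) * |s| ^ ℓ := by
      intro s hs
      set z := (m + t • v) + s • q with hz
      have hzmem : z ∈ Metric.closedBall (0 : W × W) ρ := by
        rw [Metric.mem_closedBall, dist_zero_right]
        have hA : ‖t • v‖ ≤ ‖v‖ := by
          rw [norm_smul, Real.norm_eq_abs]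
          calc |t| * ‖v‖ ≤ 1 * ‖v‖ := mul_le_mul_of_nonneg_right ht (norm_nonneg _)
            _ = ‖v‖ := one_mul _
        have hB : ‖s • q‖ ≤ ‖q‖ := by
          rw [norm_smul, Real.norm_eq_abs]
          calc |s| * ‖q‖ ≤ 1 * ‖q‖ := mul_le_mul_of_nonneg_right hs (norm_nonneg _)
            _ = ‖q‖ := one_mul _
        calc ‖z‖ ≤ ‖m‖ + ‖t • v‖ + ‖s • q‖ := by
              rw [hz]; exact le_trans (norm_add_le _ _) (by gcongr; exact norm_add_le _ _)
          _ ≤ ρ := by simp only [hρ]; linarith [hmn, hqR, hA, hB]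
      have hz12 : z.1 - z.2 = s • w := by
        rw [hz]
        have : ((m + t • v) + s • q).1 - ((m + t • v) + s • q).2
            = (m.1 - m.2) + t • (v.1 - v.2) + s • (q.1 - q.2) := by
          show m.1 + t • v.1 + s • q.1 - (m.2 + t • v.2 + s • q.2)
              = (m.1 - m.2) + t • (v.1 - v.2) + s • (q.1 - q.2)
          module
        rw [this, hm12, hv, sub_self, smul_zero, hq12]
        abel
      calc ‖f z‖ ≤ C'' * ‖z.1 - z.2‖ ^ ℓ := hC'' z hzmem
        _ = (C'' * ‖w‖ ^ ℓ) * |s| ^ ℓ := by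
            rw [hz12, norm_smul, Real.norm_eq_abs, mul_pow]
            ring
    have := oneD_vanish_s2 ℓ _ hφs (C'' * ‖w‖ ^ ℓ) 1 one_pos hφb r hr
    rw [line_iteratedDeriv q r f hf (m + t • v) 0] at this
    simpa using this
  -- Step B
  have stepB : ∀ r, r < ℓ → (dirD q)^[r] h m = 0 := by
    intro r hr
    have h1 : (fun t : ℝ => (dirD q)^[r] f (m + t • v)) =ᶠ[nhds (0:ℝ)] (fun _ => 0) := by
      filter_upwards [Metric.ball_mem_nhds (0:ℝ) one_pos] with t ht
      exact stepA t (le_of_lt (by simpa [Real.dist_eq] using ht)) r hr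
    have h2 : deriv (fun t : ℝ => (dirD q)^[r] f (m + t • v)) 0 = 0 := by
      rw [h1.deriv_eq]; simp
    have h3 : deriv (fun t : ℝ => (dirD q)^[r] f (m + t • v)) 0
        = fderiv ℝ ((dirD q)^[r] f) m v := by
      have := (hasDerivAt_line_s2 (smooth_dir_iter q r f hf) m v 0).deriv
      simpa using this
    rw [← dir_comm q v r f hf m, ← h3, h2]
  -- Step C
  set g : ℝ → F := fun s : ℝ => h (m + s • q) with hgdef
  have hgs : ContDiff ℝ (⊤:ℕ∞) g :=
    hhs.comp (contDiff_const.add (contDiff_id.smul contDiff_const))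
  have hg0 : ∀ r, r < ℓ → iteratedDeriv r g 0 = 0 := by
    intro r hr
    rw [hgdef]
    rw [line_iteratedDeriv q r h hhs m 0]
    simpa using stepB r hr
  have hgM : ∀ s : ℝ, |s| ≤ 1 → ‖iteratedDeriv ℓ g s‖ ≤ (max M 0) * ‖w‖ ^ ℓ := by
    intro s hs
    rw [hgdef, line_iteratedDeriv q ℓ h hhs m s]
    have hzmem : m + s • q ∈ Metric.closedBall (0 : W × W) ρ := by
      rw [Metric.mem_closedBall, dist_zero_right]
      have hB : ‖s • q‖ ≤ ‖q‖ := by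
        rw [norm_smul, Real.norm_eq_abs]
        calc |s| * ‖q‖ ≤ 1 * ‖q‖ := mul_le_mul_of_nonneg_right hs (norm_nonneg _)
          _ = ‖q‖ := one_mul _
      calc ‖m + s • q‖ ≤ ‖m‖ + ‖s • q‖ := norm_add_le _ _
        _ ≤ ρ := by simp only [hρ]; linarith [hmn, hqR, hB, norm_nonneg v]
    calc ‖(dirD q)^[ℓ] h (m + s • q)‖
        ≤ ‖iteratedFDeriv ℝ ℓ h (m + s • q)‖ * ‖q‖ ^ ℓ := dir_iter_norm q ℓ h hhs _
      _ ≤ (max M 0) * ‖w‖ ^ ℓ := by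
          apply mul_le_mul (le_trans (hM _ hzmem) (le_max_left _ _))
            (pow_le_pow_left₀ (norm_nonneg q) hqw ℓ) (by positivity) (le_max_right _ _)
  have hfin := oneD_bound ℓ g hgs hg0 ((max M 0) * ‖w‖ ^ ℓ) 1 hgM 1 (by norm_num)
  have hg1 : g 1 = fderiv ℝ f p v := by
    rw [hgdef]
    simp only [one_smul, hmqp]
    rfl
  rw [hg1] at hfin
  simpa using hfin

end Key

lemma alg_step (m : ℕ) (φ dv : ℝ) (hφ : 0 < φ) (a b : ℂ) :
    a * (-((((φ:ℝ):ℂ)^m)^2)⁻¹ * ((((m:ℝ) * φ^(m-1)) * (1/(2*φ) * dv) : ℝ) : ℂ))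
      + ((((φ:ℝ):ℂ))^m)⁻¹ * b
      = b / ((φ:ℝ):ℂ)^m + ((-((m:ℕ):ℝ)/2 * dv) • a) / ((φ:ℝ):ℂ)^(m+2) := by
  have hφC : ((φ:ℝ):ℂ) ≠ 0 := Complex.ofReal_ne_zero.mpr (ne_of_gt hφ)
  rw [Complex.real_smul]
  push_cast
  cases m with
  | zero => simp
  | succ n =>
    have h1 : n + 1 - 1 = n := rfl
    rw [h1]
    field_simp
    ring

section Main
variable {W : Type*} [NormedAddCommGroup W] [NormedSpace ℝ W] [ProperSpace (W × W)]

lemma main_aux (ν : ℕ) (Φ : W × W → ℝ)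
    (hΦ0 : ∀ p, 0 ≤ Φ p)
    (hΦsm : ContDiff ℝ (⊤ : ℕ∞) (fun p => (Φ p) ^ 2))
    (c₁ c₂ : ℝ) (hc₁ : 0 < c₁)
    (hΦlow : ∀ p : W × W, c₁ * ‖p.1 - p.2‖ ^ 2 ≤ (Φ p) ^ 2)
    (hΦhigh : ∀ p : W × W, (Φ p) ^ 2 ≤ c₂ * ‖p.1 - p.2‖ ^ 2)
    (J : Type) [Fintype J] (ℓ : J → ℕ)
    (α : J → W × W → ℂ)
    (hαsm : ∀ j, ContDiff ℝ (⊤ : ℕ∞) (α j))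
    (hαbd : ∀ (j : J) (K : Set (W × W)),
      IsCompact K → ∃ C : ℝ, ∀ p ∈ K, ‖α j p‖ ≤ C * ‖p.1 - p.2‖ ^ (ℓ j))
    (E : W × W → ℂ)
    (hE : ∀ p : W × W, p.1 ≠ p.2 → E p = ∑ j, α j p / (Φ p : ℂ) ^ (ν + ℓ j))
    (v : W × W) (hv : v.1 = v.2) :
    ∃ (n' : ℕ) (ℓ' : Fin n' → ℕ) (α' : Fin n' → W × W → ℂ),
      (∀ i, ContDiff ℝ (⊤ : ℕ∞) (α' i)) ∧
      (∀ (i : Fin n') (K : Set (W × W)),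
        IsCompact K → ∃ C' : ℝ, ∀ p ∈ K, ‖α' i p‖ ≤ C' * ‖p.1 - p.2‖ ^ (ℓ' i)) ∧
      ∀ p : W × W, p.1 ≠ p.2 →
        fderiv ℝ E p v = ∑ i, α' i p / (Φ p : ℂ) ^ (ν + ℓ' i) := by
  classical
  set ψ : W × W → ℝ := fun p => (Φ p) ^ 2 with hψdef
  have hψs : ContDiff ℝ (⊤:ℕ∞) ψ := hΦsm
  set β : J → W × W → ℂ := fun j p => fderiv ℝ (α j) p v with hβdef
  set γ : J → W × W → ℂ :=
    fun j p => ((-(((ν + ℓ j : ℕ)):ℝ)/2 * fderiv ℝ ψ p v)) • α j p with hγdef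
  have hβs : ∀ j, ContDiff ℝ (⊤:ℕ∞) (β j) := fun j => smooth_dir (hαsm j) v
  have hγs : ∀ j, ContDiff ℝ (⊤:ℕ∞) (γ j) := by
    intro j
    exact ContDiff.smul (contDiff_const.mul (smooth_dir hψs v)) (hαsm j)
  have hψbd : ∀ K : Set (W × W), IsCompact K → ∃ C, ∀ p ∈ K, ‖ψ p‖ ≤ C * ‖p.1 - p.2‖ ^ 2 := by
    intro K hK
    exact ⟨c₂, fun p hp => by
      rw [Real.norm_eq_abs, abs_of_nonneg (sq_nonneg _)]; exact hΦhigh p⟩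
  have hDψbd := key_bound 2 ψ hψs hψbd v hv
  have hβbd : ∀ (j : J) (K : Set (W × W)), IsCompact K →
      ∃ C, ∀ p ∈ K, ‖β j p‖ ≤ C * ‖p.1 - p.2‖ ^ (ℓ j) :=
    fun j => key_bound (ℓ j) (α j) (hαsm j) (hαbd j) v hv
  have hγbd : ∀ (j : J) (K : Set (W × W)), IsCompact K →
      ∃ C, ∀ p ∈ K, ‖γ j p‖ ≤ C * ‖p.1 - p.2‖ ^ (ℓ j + 2) := by
    intro j K hK
    obtain ⟨C₁, hC₁⟩ := hαbd j K hK
    obtain ⟨C₂, hC₂⟩ := hDψbd K hK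
    refine ⟨(((ν + ℓ j : ℕ)):ℝ)/2 * (C₂ * C₁), fun p hp => ?_⟩
    have habs : ‖γ j p‖ = (((ν + ℓ j : ℕ)):ℝ)/2 * (‖fderiv ℝ ψ p v‖ * ‖α j p‖) := by
      rw [hγdef]
      simp only
      rw [norm_smul, Real.norm_eq_abs, abs_mul, abs_div, abs_neg, Nat.abs_cast, abs_two,
        Real.norm_eq_abs, mul_assoc]
    rw [habs]
    have h1 : ‖fderiv ℝ ψ p v‖ * ‖α j p‖ ≤ (C₂ * ‖p.1 - p.2‖ ^ 2) * (C₁ * ‖p.1 - p.2‖ ^ (ℓ j)) :=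
      mul_le_mul (hC₂ p hp) (hC₁ p hp) (norm_nonneg _)
        (le_trans (norm_nonneg _) (hC₂ p hp))
    calc (((ν + ℓ j : ℕ)):ℝ)/2 * (‖fderiv ℝ ψ p v‖ * ‖α j p‖)
        ≤ (((ν + ℓ j : ℕ)):ℝ)/2 * ((C₂ * ‖p.1 - p.2‖ ^ 2) * (C₁ * ‖p.1 - p.2‖ ^ (ℓ j))) :=
          mul_le_mul_of_nonneg_left h1 (by positivity)
      _ = (((ν + ℓ j : ℕ)):ℝ)/2 * (C₂ * C₁) * ‖p.1 - p.2‖ ^ (ℓ j + 2) := by ring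
  -- the derivative identity
  have hder : ∀ p : W × W, p.1 ≠ p.2 →
      fderiv ℝ E p v
        = ∑ j, (β j p / (Φ p : ℂ) ^ (ν + ℓ j) + γ j p / (Φ p : ℂ) ^ (ν + (ℓ j + 2))) := by
    intro p hp12
    have hψpos : 0 < ψ p := by
      have h1 : 0 < ‖p.1 - p.2‖ := by
        rw [norm_pos_iff]; exact sub_ne_zero.mpr hp12
      calc (0:ℝ) < c₁ * ‖p.1 - p.2‖ ^ 2 := by positivity
        _ ≤ ψ p := hΦlow p
    have hφpos : 0 < Φ p := by
      rcases lt_or_eq_of_le (hΦ0 p) with h | h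
      · exact h
      · exfalso
        have : ψ p = 0 := by rw [hψdef]; simp only; rw [← h]; norm_num
        rw [this] at hψpos; exact lt_irrefl 0 hψpos
    have hφC : ((Φ p : ℝ):ℂ) ≠ 0 := Complex.ofReal_ne_zero.mpr (ne_of_gt hφpos)
    have hψd : HasFDerivAt ψ (fderiv ℝ ψ p) p :=
      ((hψs.differentiable (by simp)) p).hasFDerivAt
    have hsq0 : HasDerivAt Real.sqrt (1 / (2 * Real.sqrt (ψ p))) (ψ p) :=
      Real.hasDerivAt_sqrt (ne_of_gt hψpos)
    have hsqψ : Real.sqrt (ψ p) = Φ p := by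
      rw [hψdef]; exact Real.sqrt_sq (hΦ0 p)
    have hΦd : HasFDerivAt Φ ((1 / (2 * Φ p)) • fderiv ℝ ψ p) p := by
      have h := hsq0.comp_hasFDerivAt p hψd
      rw [hsqψ] at h
      have hfun : Real.sqrt ∘ ψ = Φ := by
        funext y
        show Real.sqrt (ψ y) = Φ y
        rw [hψdef]; exact Real.sqrt_sq (hΦ0 y)
      rw [hfun] at h
      exact h
    -- per-term derivative
    have hterm : ∀ j : J, HasFDerivAt (fun y => α j y / (Φ y : ℂ) ^ (ν + ℓ j))
        (α j p • ((-((((Φ p : ℝ):ℂ) ^ (ν + ℓ j)) ^ 2)⁻¹) •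
            (Complex.ofRealCLM.comp (((((ν + ℓ j : ℕ)):ℝ) * Φ p ^ (ν + ℓ j - 1)) •
              ((1 / (2 * Φ p)) • fderiv ℝ ψ p))))
          + (((Φ p : ℝ):ℂ) ^ (ν + ℓ j))⁻¹ • fderiv ℝ (α j) p) p := by
      intro j
      set mj := ν + ℓ j with hmj
      have hpow : HasFDerivAt (fun y => Φ y ^ mj)
          (((mj:ℝ) * Φ p ^ (mj - 1)) • ((1 / (2 * Φ p)) • fderiv ℝ ψ p)) p := by
        have h := (hasDerivAt_pow mj (Φ p)).comp_hasFDerivAt p hΦd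
        exact h
      have hpowC : HasFDerivAt (fun y => ((Φ y : ℝ):ℂ) ^ mj)
          (Complex.ofRealCLM.comp (((mj:ℝ) * Φ p ^ (mj - 1)) • ((1 / (2 * Φ p)) • fderiv ℝ ψ p))) p := by
        have h := Complex.ofRealCLM.hasFDerivAt.comp p hpow
        have hfun : (Complex.ofRealCLM ∘ fun y => Φ y ^ mj) = fun y => ((Φ y : ℝ):ℂ) ^ mj := by
          funext y
          show (((Φ y ^ mj : ℝ)):ℂ) = ((Φ y : ℝ):ℂ) ^ mj
          push_cast
          ring
        rw [hfun] at h
        exact h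
      have hne : ((Φ p : ℝ):ℂ) ^ mj ≠ 0 := pow_ne_zero _ hφC
      have hinv : HasFDerivAt (fun y => (((Φ y : ℝ):ℂ) ^ mj)⁻¹)
          ((-((((Φ p : ℝ):ℂ) ^ mj) ^ 2)⁻¹) •
            (Complex.ofRealCLM.comp (((mj:ℝ) * Φ p ^ (mj - 1)) • ((1 / (2 * Φ p)) • fderiv ℝ ψ p)))) p := by
        have h := (hasDerivAt_inv hne).comp_hasFDerivAt p hpowC
        exact h
      have hα : HasFDerivAt (α j) (fderiv ℝ (α j) p) p :=
        (((hαsm j).differentiable (by simp)) p).hasFDerivAt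
      have h : HasFDerivAt (fun y => α j y * (((Φ y : ℝ):ℂ) ^ mj)⁻¹) _ p := hα.mul hinv
      have hfun : (fun y => α j y * (((Φ y : ℝ):ℂ) ^ mj)⁻¹) = fun y => α j y / (Φ y : ℂ) ^ mj := by
        funext y
        rw [div_eq_mul_inv]
      rw [hfun] at h
      exact h
    have hEs : E =ᶠ[nhds p] (fun y => ∑ j, α j y / (Φ y : ℂ) ^ (ν + ℓ j)) := by
      have hUopen : IsOpen {r : W × W | r.1 ≠ r.2} := by
        have : IsClosed {r : W × W | r.1 = r.2} := isClosed_eq continuous_fst continuous_snd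
        exact this.isOpen_compl
      filter_upwards [hUopen.mem_nhds hp12] with r hr
      exact hE r hr
    have hSder := HasFDerivAt.fun_sum (u := Finset.univ)
      (fun j _ => hterm j)
    have hfeq : fderiv ℝ E p = ∑ j, (α j p • ((-((((Φ p : ℝ):ℂ) ^ (ν + ℓ j)) ^ 2)⁻¹) •
            (Complex.ofRealCLM.comp (((((ν + ℓ j : ℕ)):ℝ) * Φ p ^ (ν + ℓ j - 1)) •
              ((1 / (2 * Φ p)) • fderiv ℝ ψ p))))
          + (((Φ p : ℝ):ℂ) ^ (ν + ℓ j))⁻¹ • fderiv ℝ (α j) p) := by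
      rw [hEs.fderiv_eq]
      exact hSder.fderiv
    rw [hfeq]
    rw [ContinuousLinearMap.sum_apply]
    apply Finset.sum_congr rfl
    intro j _
    rw [show ν + (ℓ j + 2) = (ν + ℓ j) + 2 from by omega]
    simp only [ContinuousLinearMap.add_apply, ContinuousLinearMap.smul_apply,
      ContinuousLinearMap.comp_apply, Complex.ofRealCLM_apply, smul_eq_mul]
    rw [hβdef, hγdef]
    simp only
    rw [← alg_step (ν + ℓ j) (Φ p) (fderiv ℝ ψ p v) hφpos (α j p) (fderiv ℝ (α j) p v)]
  -- assemble
  set n' : ℕ := Fintype.card (J ⊕ J) with hn'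
  set e : (J ⊕ J) ≃ Fin n' := Fintype.equivFin (J ⊕ J) with he
  refine ⟨n', fun i => Sum.elim (fun j => ℓ j) (fun j => ℓ j + 2) (e.symm i),
    fun i => Sum.elim β γ (e.symm i), ?_, ?_, ?_⟩
  · intro i
    rcases hsi : e.symm i with j | j <;> simp [hsi, hβs j, hγs j]
  · intro i K hK
    rcases hsi : e.symm i with j | j
    · obtain ⟨C, hC⟩ := hβbd j K hK
      exact ⟨C, fun p hp => by simpa [hsi] using hC p hp⟩
    · obtain ⟨C, hC⟩ := hγbd j K hK
      exact ⟨C, fun p hp => by simpa [hsi] using hC p hp⟩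
  · intro p hp12
    rw [hder p hp12]
    rw [Finset.sum_add_distrib]
    have hre : ∑ i : Fin n', Sum.elim β γ (e.symm i) p
          / (Φ p : ℂ) ^ (ν + Sum.elim (fun j => ℓ j) (fun j => ℓ j + 2) (e.symm i))
        = ∑ z : J ⊕ J, Sum.elim β γ z p
          / (Φ p : ℂ) ^ (ν + Sum.elim (fun j => ℓ j) (fun j => ℓ j + 2) z) := by
      exact Equiv.sum_comp e.symm
        (fun z => Sum.elim β γ z p / (Φ p : ℂ) ^ (ν + Sum.elim (fun j => ℓ j) (fun j => ℓ j + 2) z))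
    rw [hre, Fintype.sum_sum_type]
    simp only [Sum.elim_inl, Sum.elim_inr]
  
end Main

/-- The structural identity `L_k ℰ_ν = ℰ_ν` from the proof of Lemma 3.2: the tangential
derivative `L_k = ∂/∂x_k + ∂/∂y_k` of a kernel `ℰ = ∑ αⱼ/Φ^(ν+ℓⱼ)` (with `Φ ~ |x-y|`,
`|αⱼ| ≤ C|x-y|^ℓⱼ` locally uniformly) is, off the diagonal, again of the same form. -/
theorem stmt2 (N : ℕ) (hN : 1 ≤ N) (ν : ℕ)
    (Φ : (EuclideanSpace ℝ (Fin N)) × (EuclideanSpace ℝ (Fin N)) → ℝ)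
    (hΦ0 : ∀ p, 0 ≤ Φ p)
    (hΦsm : ContDiff ℝ (⊤ : ℕ∞) (fun p => (Φ p) ^ 2))
    (c₁ c₂ : ℝ) (hc₁ : 0 < c₁) (hc₁₂ : c₁ ≤ c₂)
    (hΦlow : ∀ p : (EuclideanSpace ℝ (Fin N)) × (EuclideanSpace ℝ (Fin N)),
      c₁ * ‖p.1 - p.2‖ ^ 2 ≤ (Φ p) ^ 2)
    (hΦhigh : ∀ p : (EuclideanSpace ℝ (Fin N)) × (EuclideanSpace ℝ (Fin N)),
      (Φ p) ^ 2 ≤ c₂ * ‖p.1 - p.2‖ ^ 2)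
    (J : Type) [Fintype J] (ℓ : J → ℕ)
    (α : J → (EuclideanSpace ℝ (Fin N)) × (EuclideanSpace ℝ (Fin N)) → ℂ)
    (hαsm : ∀ j, ContDiff ℝ (⊤ : ℕ∞) (α j))
    (hαbd : ∀ (j : J) (K : Set ((EuclideanSpace ℝ (Fin N)) × (EuclideanSpace ℝ (Fin N)))),
      IsCompact K → ∃ C : ℝ, ∀ p ∈ K, ‖α j p‖ ≤ C * ‖p.1 - p.2‖ ^ (ℓ j))
    (E : (EuclideanSpace ℝ (Fin N)) × (EuclideanSpace ℝ (Fin N)) → ℂ)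
    (hE : ∀ p : (EuclideanSpace ℝ (Fin N)) × (EuclideanSpace ℝ (Fin N)), p.1 ≠ p.2 →
      E p = ∑ j, α j p / (Φ p : ℂ) ^ (ν + ℓ j))
    (k : Fin N) :
    ∃ (n' : ℕ) (ℓ' : Fin n' → ℕ)
      (α' : Fin n' → (EuclideanSpace ℝ (Fin N)) × (EuclideanSpace ℝ (Fin N)) → ℂ),
      (∀ i, ContDiff ℝ (⊤ : ℕ∞) (α' i)) ∧
      (∀ (i : Fin n') (K : Set ((EuclideanSpace ℝ (Fin N)) × (EuclideanSpace ℝ (Fin N)))),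
        IsCompact K → ∃ C' : ℝ, ∀ p ∈ K, ‖α' i p‖ ≤ C' * ‖p.1 - p.2‖ ^ (ℓ' i)) ∧
      ∀ p : (EuclideanSpace ℝ (Fin N)) × (EuclideanSpace ℝ (Fin N)), p.1 ≠ p.2 →
        fderiv ℝ E p (EuclideanSpace.single k (1 : ℝ), EuclideanSpace.single k (1 : ℝ))
          = ∑ i, α' i p / (Φ p : ℂ) ^ (ν + ℓ' i) := by
  exact main_aux ν Φ hΦ0 hΦsm c₁ c₂ hc₁ hΦlow hΦhigh J ℓ α hαsm hαbd E hE
    (EuclideanSpace.single k (1 : ℝ), EuclideanSpace.single k (1 : ℝ)) rfl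
end
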